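/- Let k be an infinite field and A a finite-dimensional associative unital k-algebra with basis e₁, …, eₙ, and let d be the degree of algebraicity of A, i.e. the degree of the minimal polynomial of the generic element α = t₁e₁ + ⋯ + tₙeₙ ∈ A ⊗_k k(t₁, …, tₙ) over k(t₁, …, tₙ). Then d = max over x ∈ A of deg(minpoly_k(x)): every x ∈ A has deg(minpoly_k(x)) ≤ d, and there exists x ∈ A with deg(minpoly_k(x)) = d. -/

import Mathlib

/-!
Over `R = k[X₁, …, Xₙ]` put `β = ∑ Xᵢ ⊗ eᵢ`: the generic element `α` is the image of `β`
in `K ⊗ A`, and every `x = ∑ cᵢ eᵢ ∈ A` is its specialisation at `c`. Over a field, the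
minimal polynomial of an element has degree `≥ m` iff its first `m` powers are linearly
independent, i.e. iff some `m × m` minor of their coordinate matrix is nonzero. These minors
are the images of fixed polynomials in `R`; they are nonzero in `K` iff they are nonzero
polynomials, and a nonzero polynomial over an infinite field does not vanish at some `c`.
-/

open scoped TensorProduct

universe u v w

open Module Submodule

theorem linearIndependent_pow_iff_le_natDegree_minpoly {F B : Type*} [Field F] [Ring B]
    [Algebra F B] {x : B} (hx : IsIntegral F x) {m : ℕ} :
    LinearIndependent F (fun j : Fin m => x ^ (j : ℕ)) ↔ m ≤ (minpoly F x).natDegree := by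
  refine ⟨fun h => ?_, fun hm => (linearIndependent_pow x).comp _ (Fin.castLE_injective hm)⟩
  set N := (minpoly F x).natDegree
  have hspan : span F (Set.range fun j : Fin m => x ^ (j : ℕ)) ≤
      span F (Set.range fun i : Fin N => x ^ (i : ℕ)) :=
    span_le.2 <| by
      rintro _ ⟨j, rfl⟩
      exact hx.mem_span_pow ⟨Polynomial.X ^ (j : ℕ), by simp⟩
  have := Module.Finite.span_of_finite F (Set.finite_range fun i : Fin N => x ^ (i : ℕ))
  calc m = Fintype.card (Fin m) := (Fintype.card_fin m).symm
    _ ≤ (Set.range fun j : Fin m => x ^ (j : ℕ)).finrank F :=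
      linearIndependent_iff_card_le_finrank_span.1 h
    _ ≤ (Set.range fun i : Fin N => x ^ (i : ℕ)).finrank F := Submodule.finrank_mono hspan
    _ ≤ N := (finrank_range_le_card _).trans (Fintype.card_fin _).le

theorem Matrix.linearIndependent_rows_iff_exists_det_submatrix_ne_zero {F ι : Type*} [Field F]
    [Fintype ι] {m : ℕ} (M : Matrix (Fin m) ι F) :
    LinearIndependent F M.row ↔
      ∃ g : Fin m → ι, Function.Injective g ∧ (M.submatrix id g).det ≠ 0 := by
  classical
  constructor
  · intro h
    have hspan : span F (Set.range M.col) = ⊤ := by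
      apply Submodule.eq_top_of_finrank_eq
      rw [← Matrix.rank_eq_finrank_span_cols, h.rank_matrix, finrank_fin_fun, Fintype.card_fin]
    obtain ⟨κ, a, ha, hspan_a, hli⟩ := exists_linearIndependent' F M.col
    let B : Basis κ F (Fin m → F) := Basis.mk hli (by rw [hspan_a, hspan])
    let σ : Fin m ≃ κ := (Pi.basisFun F (Fin m)).indexEquiv B
    refine ⟨a ∘ σ, ha.comp σ.injective, ?_⟩
    rw [← isUnit_iff_ne_zero, ← Matrix.isUnit_iff_isUnit_det,
      ← Matrix.linearIndependent_cols_iff_isUnit]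
    exact hli.comp σ σ.injective
  · rintro ⟨g, -, hg⟩
    exact LinearIndependent.of_comp (LinearMap.funLeft F F g)
      (Matrix.linearIndependent_rows_of_det_ne_zero hg)

theorem Module.Basis.linearIndependent_iff_exists_det_repr_ne_zero {F V ι : Type*} [Field F]
    [AddCommGroup V] [Module F V] [Fintype ι] (b : Basis ι F V) {m : ℕ} (v : Fin m → V) :
    LinearIndependent F v ↔
      ∃ g : Fin m → ι, Function.Injective g ∧
        (Matrix.of fun i j => b.repr (v i) (g j)).det ≠ 0 := by
  rw [← b.equivFun.toLinearMap.linearIndependent_iff b.equivFun.ker]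
  exact Matrix.linearIndependent_rows_iff_exists_det_submatrix_ne_zero
    (Matrix.of fun i j => b.repr (v i) j)

section PowMinor

variable {k A ι : Type*} [CommRing k] [Ring A] [Algebra k A] (e : Basis ι k A)

noncomputable def powMinor {R : Type*} [CommRing R] [Algebra k R] (z : R ⊗[k] A) {m : ℕ}
    (g : Fin m → ι) : R :=
  (Matrix.of fun i j : Fin m => (Algebra.TensorProduct.basis R e).repr (z ^ (i : ℕ)) (g j)).det

theorem Algebra.TensorProduct.basis_repr_map {R S : Type*} [CommRing R] [Algebra k R]
    [CommRing S] [Algebra k S] (φ : R →ₐ[k] S) (z : R ⊗[k] A) (i : ι) :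
    (basis S e).repr (map φ (AlgHom.id k A) z) i = φ ((basis R e).repr z i) := by
  induction z using TensorProduct.induction_on with
  | zero => simp
  | tmul r a => simp
  | add x y hx hy => simp [hx, hy]

theorem powMinor_map {R S : Type*} [CommRing R] [Algebra k R] [CommRing S] [Algebra k S]
    (φ : R →ₐ[k] S) (z : R ⊗[k] A) {m : ℕ} (g : Fin m → ι) :
    powMinor e (Algebra.TensorProduct.map φ (AlgHom.id k A) z) g = φ (powMinor e z g) := by
  simp only [powMinor, ← map_pow, Algebra.TensorProduct.basis_repr_map]
  exact (φ.toRingHom.map_det _).symm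

variable [Fintype ι]

theorem le_natDegree_minpoly_iff_exists_powMinor_ne_zero {L : Type*} [Field L]
    [Algebra k L] (z : L ⊗[k] A) (m : ℕ) :
    m ≤ (minpoly L z).natDegree ↔
      ∃ g : Fin m → ι, Function.Injective g ∧ powMinor e z g ≠ 0 := by
  have : Module.Finite L (L ⊗[k] A) := .of_basis (Algebra.TensorProduct.basis L e)
  rw [← linearIndependent_pow_iff_le_natDegree_minpoly (.of_finite L z),
    (Algebra.TensorProduct.basis L e).linearIndependent_iff_exists_det_repr_ne_zero]
  rfl

theorem le_natDegree_minpoly_map_iff {R L : Type*} [CommRing R] [Algebra k R]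
    [Field L] [Algebra k L] (φ : R →ₐ[k] L) (z : R ⊗[k] A) (m : ℕ) :
    m ≤ (minpoly L (Algebra.TensorProduct.map φ (AlgHom.id k A) z)).natDegree ↔
      ∃ g : Fin m → ι, Function.Injective g ∧ φ (powMinor e z g) ≠ 0 := by
  simp only [le_natDegree_minpoly_iff_exists_powMinor_ne_zero e, powMinor_map]

noncomputable def genericElement : MvPolynomial ι k ⊗[k] A :=
  ∑ i, MvPolynomial.X i ⊗ₜ[k] e i

end PowMinor

theorem le_natDegree_minpoly_sum_smul_iff {k A ι : Type*} [Field k] [Ring A] [Algebra k A]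
    [Fintype ι] (e : Basis ι k A) (c : ι → k) (m : ℕ) :
    m ≤ (minpoly k (∑ i, c i • e i)).natDegree ↔
      ∃ g : Fin m → ι, Function.Injective g ∧
        MvPolynomial.aeval c (powMinor e (genericElement e) g) ≠ 0 := by
  have hspecialise : ∑ i, c i • e i = Algebra.TensorProduct.lid k A
      (Algebra.TensorProduct.map (MvPolynomial.aeval c) (AlgHom.id k A) (genericElement e)) := by
    simp [genericElement]
  rw [hspecialise, minpoly.algEquiv_eq, le_natDegree_minpoly_map_iff e]

/-- Over an infinite field `k`, the degree of algebraicity `d` of a finite-dimensional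
`k`-algebra `A` (the degree of the minimal polynomial of the generic element) is the
maximum of the degrees of minimal polynomials of elements of `A`: every `x ∈ A`
satisfies `deg(minpoly k x) ≤ d`, and some `x ∈ A` attains `d`. -/
theorem deg_of_algebraicity_eq_sup_deg_minpoly
    {k : Type u} [Field k] [Infinite k] {n : ℕ}
    {A : Type v} [Ring A] [Algebra k A] (e : Module.Basis (Fin n) k A)
    {K : Type w} [Field K] [Algebra (MvPolynomial (Fin n) k) K]
    [IsFractionRing (MvPolynomial (Fin n) k) K]
    [Algebra k K] [IsScalarTower k (MvPolynomial (Fin n) k) K]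
    (α : K ⊗[k] A)
    (hα : α = ∑ i, algebraMap (MvPolynomial (Fin n) k) K (MvPolynomial.X i) ⊗ₜ[k] e i)
    (d : ℕ) (hd : d = (minpoly K α).natDegree) :
    (∀ x : A, (minpoly k x).natDegree ≤ d)
    ∧ ∃ x : A, (minpoly k x).natDegree = d := by
  have hα' : α = Algebra.TensorProduct.map (IsScalarTower.toAlgHom k _ K) (AlgHom.id k A)
      (genericElement e) := by
    simp [hα, genericElement]
  have le_d_iff : ∀ m, m ≤ d ↔ ∃ g : Fin m → Fin n, Function.Injective g ∧
      powMinor e (genericElement e) g ≠ 0 := by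
    intro m
    simp only [hd, hα', le_natDegree_minpoly_map_iff e, IsScalarTower.coe_toAlgHom', ne_eq,
      map_eq_zero_iff _ (IsFractionRing.injective (MvPolynomial (Fin n) k) K)]
  have le_d : ∀ x : A, (minpoly k x).natDegree ≤ d := by
    intro x
    by_contra! hlt
    rw [← e.sum_repr x, Nat.lt_iff_add_one_le, le_natDegree_minpoly_sum_smul_iff] at hlt
    obtain ⟨g, hg, hne⟩ := hlt
    have := (le_d_iff (d + 1)).2 ⟨g, hg, fun h => hne (by rw [h, map_zero])⟩
    omega
  obtain ⟨g, hg, hne⟩ := (le_d_iff d).1 le_rfl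
  obtain ⟨c, hc⟩ :
      ∃ c : Fin n → k, MvPolynomial.aeval c (powMinor e (genericElement e) g) ≠ 0 := by
    by_contra! h
    exact hne (MvPolynomial.funext fun c => by rw [map_zero]; exact h c)
  refine ⟨le_d, ∑ i, c i • e i, (le_d _).antisymm ?_⟩
  exact (le_natDegree_minpoly_sum_smul_iff e c d).2 ⟨g, hg, hc⟩
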